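/- arXiv:1607.06650 — 2 statements merged into one kernel-verified Lean document; each statement's English description precedes it below -/
import Mathlib

section
/- Let l ≥ 1 be real and define q̄(E) := q_M(E) E^{−1/(2l)} for E large. Then q̄ admits an asymptotic expansion in powers of μ² = E^{−1/l} with first term 1: for every N ≥ 0 there exist real constants c₀ = 1, c₁, …, c_N such that q̄(E) − Σ_{j=0}^{N} c_j E^{−j/l} = O(E^{−(N+1)/l}) as E → ∞; equivalently q_M(E) = E^{1/(2l)}(1 + Σ_{j=1}^{N} c_j E^{−j/l} + O(E^{−(N+1)/l})). -/
open Real MeasureTheory intervalIntegral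

noncomputable section

/-- Japanese bracket `⟨x⟩ = √(1+x²)`. -/
def jap (x : ℝ) : ℝ := Real.sqrt (1 + x ^ 2)

/-- The weight `λ(x,ξ) = (1+ξ²+|x|^{2l})^{1/(2l)}`. -/
def lam (l x ξ : ℝ) : ℝ := (1 + ξ ^ 2 + |x| ^ (2 * l)) ^ (1 / (2 * l))

/-- The symbol class `S^{m₁,m₂}`:  `g ∈ C^∞(ℝ²)` with
`|∂_ξ^{k₁}∂_x^{k₂} g(x,ξ)| ≤ C λ(x,ξ)^{m₁-k₁ l} ⟨x⟩^{m₂-k₂}`. -/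
def IsSymbol (l m₁ m₂ : ℝ) (g : ℝ → ℝ → ℝ) : Prop :=
  ContDiff ℝ (⊤ : ℕ∞) (fun q : ℝ × ℝ => g q.1 q.2) ∧
  ∀ k₁ k₂ : ℕ, ∃ C : ℝ, ∀ x ξ : ℝ,
    |iteratedDeriv k₁ (fun ξ' => iteratedDeriv k₂ (fun x' => g x' ξ') x) ξ|
      ≤ C * lam l x ξ ^ (m₁ - (k₁ : ℝ) * l) * jap x ^ (m₂ - (k₂ : ℝ))

/-- The standing assumptions on the potential `V`: it is `C^∞`, even, has no critical
points away from `0`, satisfies the symbol bounds `|∂_x^k V| ≤ C_k ⟨x⟩^{2l-k}`, and admits an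
asymptotic expansion `V(x) ∼ |x|^{2l} + Σ_{j≥1} V_{2l-2j}(x)` with `V_{2l-2j}` smooth away
from zero and positively homogeneous of degree `2l-2j`. -/
structure GoodPotential (l : ℝ) (V : ℝ → ℝ) : Prop where
  smooth : ContDiff ℝ (⊤ : ℕ∞) V
  even : ∀ x : ℝ, V (-x) = V x
  deriv_ne : ∀ x : ℝ, x ≠ 0 → deriv V x ≠ 0
  growth : ∀ k : ℕ, ∃ C : ℝ, ∀ x : ℝ, |iteratedDeriv k V x| ≤ C * jap x ^ (2 * l - (k : ℝ))
  expansion : ∃ Vh : ℕ → ℝ → ℝ,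
    (∀ j : ℕ, 1 ≤ j →
      ContDiffOn ℝ (⊤ : ℕ∞) (Vh j) {x : ℝ | x ≠ 0} ∧
      ∀ ρ : ℝ, 0 < ρ → ∀ x : ℝ, Vh j (ρ * x) = ρ ^ (2 * l - 2 * (j : ℝ)) * Vh j x) ∧
    ∀ N k : ℕ, ∃ C R : ℝ, ∀ x : ℝ, R ≤ |x| →
      |iteratedDeriv k (fun y => V y - |y| ^ (2 * l) - ∑ j ∈ Finset.Icc 1 N, Vh j y) x|
        ≤ C * |x| ^ (2 * l - 2 * ((N : ℝ) + 1) - (k : ℝ))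

/-- `qM` is the turning point function: the unique positive solution of `V(q_M(E)) = E`
for `E > V 0`. -/
def IsTurningPoint (V qM : ℝ → ℝ) : Prop :=
  ∀ E : ℝ, V 0 < E →
    0 < qM E ∧ V (qM E) = E ∧ ∀ q : ℝ, 0 < q → V q = E → q = qM E

/-- The period `T(E) = 4∫₀^{q_M(E)} dq/√(E-V(q))`. -/
def period (V qM : ℝ → ℝ) (E : ℝ) : ℝ :=
  4 * ∫ q in (0:ℝ)..(qM E), (Real.sqrt (E - V q))⁻¹

/-- The orbit average
`⟨p⟩(E) = (1/T(E)) ∫_{-q_M}^{q_M} [p(q,√(E-V q)) + p(q,-√(E-V q))]/√(E-V q) dq`. -/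
def orbitAvg (V qM : ℝ → ℝ) (p : ℝ → ℝ → ℝ) (E : ℝ) : ℝ :=
  (period V qM E)⁻¹ *
    ∫ q in (-(qM E))..(qM E),
      (p q (Real.sqrt (E - V q)) + p q (-Real.sqrt (E - V q))) / Real.sqrt (E - V q)

open Real

lemma implicit_one_dim {g : ℝ × ℝ → ℝ} {d : ℝ}
    (hg : ContDiffAt ℝ (⊤ : ℕ∞) g (0, 1)) (hval : g (0, 1) = 1)
    (hslice : HasDerivAt (fun u => g (0, u)) d 1) (hd : d ≠ 0) :
    ∃ φ : ℝ → ℝ, ContDiffAt ℝ (⊤ : ℕ∞) φ 0 ∧ φ 0 = 1 ∧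
      ∀ᶠ s in nhds (0 : ℝ), g (s, φ s) = 1 := by
  set L : ℝ × ℝ →L[ℝ] ℝ := fderiv ℝ g (0, 1) with hLdef
  have hL : HasFDerivAt g L (0, 1) :=
    (hg.differentiableAt (by simp)).hasFDerivAt
  have hpb : L (0, 1) = d := by
    have hcomp : HasDerivAt (fun u : ℝ => g (0, u)) (L (0, 1)) 1 := by
      have h1 : HasDerivAt (fun u : ℝ => ((0 : ℝ), u)) ((0 : ℝ), (1 : ℝ)) 1 :=
        (hasDerivAt_const _ _).prodMk (hasDerivAt_id 1)
      exact hL.comp_hasDerivAt 1 h1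
    exact hcomp.unique hslice
  set pa : ℝ := L (1, 0) with hpadef
  have hlin : ∀ v : ℝ × ℝ, L v = v.1 * pa + v.2 * d := by
    intro v
    have hv : v = v.1 • ((1:ℝ), (0:ℝ)) + v.2 • ((0:ℝ), (1:ℝ)) := by
      ext <;> simp
    rw [hv, map_add, _root_.map_smul, _root_.map_smul, hpb]
    simp [smul_eq_mul, mul_comm]
    exact Or.inl rfl
  -- the linear equivalence
  set flin : ℝ × ℝ →L[ℝ] ℝ × ℝ := (ContinuousLinearMap.fst ℝ ℝ ℝ).prod L with hflin
  set ginvlin : ℝ × ℝ →ₗ[ℝ] ℝ × ℝ :=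
    (LinearMap.fst ℝ ℝ ℝ).prod
      (d⁻¹ • (LinearMap.snd ℝ ℝ ℝ - pa • LinearMap.fst ℝ ℝ ℝ)) with hginvlin
  have hcomp1 : ∀ v : ℝ × ℝ, flin (ginvlin v) = v := by
    intro v
    have := hlin (ginvlin v)
    ext
    · simp [hginvlin, hflin]
    · simp only [hflin, ContinuousLinearMap.prod_apply, ContinuousLinearMap.coe_fst']
      rw [hlin]
      simp [hginvlin]
      field_simp
      ring
  have hcomp2 : ∀ v : ℝ × ℝ, ginvlin (flin v) = v := by
    intro v
    ext
    · simp [hginvlin, hflin]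
    · simp [hginvlin, hflin, hlin v]
      field_simp
      ring
  set elin : (ℝ × ℝ) ≃ₗ[ℝ] (ℝ × ℝ) :=
    LinearEquiv.ofLinear (flin.toLinearMap) ginvlin
      (LinearMap.ext hcomp1) (LinearMap.ext hcomp2) with helin
  set e : (ℝ × ℝ) ≃L[ℝ] (ℝ × ℝ) := elin.toContinuousLinearEquiv with he
  have heq : (e : ℝ × ℝ →L[ℝ] ℝ × ℝ) = flin := by
    ext v <;> rfl
  set Φ : ℝ × ℝ → ℝ × ℝ := fun p => (p.1, g p) with hΦdef
  have hΦ : ContDiffAt ℝ (⊤ : ℕ∞) Φ (0, 1) := contDiffAt_fst.prodMk hg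
  have hΦ' : HasFDerivAt Φ (e : ℝ × ℝ →L[ℝ] ℝ × ℝ) (0, 1) := by
    rw [heq]
    exact (hasFDerivAt_fst).prodMk hL
  have hn : ((⊤ : ℕ∞) : WithTop ℕ∞) ≠ 0 := by simp
  set ginv : ℝ × ℝ → ℝ × ℝ := hΦ.localInverse hΦ' hn with hginv
  have hΦval : Φ (0, 1) = (0, 1) := by simp [hΦdef, hval]
  have hginv_cd : ContDiffAt ℝ (⊤ : ℕ∞) ginv (0, 1) := by
    have := hΦ.to_localInverse hΦ' hn
    rwa [hΦval] at this
  have hginv0 : ginv (0, 1) = (0, 1) := by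
    have := hΦ.localInverse_apply_image hΦ' hn
    rwa [hΦval] at this
  have hre : ∀ᶠ y in nhds ((0 : ℝ), (1 : ℝ)), Φ (ginv y) = y := by
    have := (hΦ.hasStrictFDerivAt' hΦ' hn).eventually_right_inverse
    rwa [hΦval] at this
  refine ⟨fun s => (ginv (s, 1)).2, ?_, ?_, ?_⟩
  · have h1 : ContDiffAt ℝ (⊤ : ℕ∞) (fun s : ℝ => ((s : ℝ), (1 : ℝ))) 0 :=
      (contDiff_id.prodMk contDiff_const).contDiffAt
    have h2 : ContDiffAt ℝ (⊤ : ℕ∞) (fun s : ℝ => ginv (s, 1)) 0 :=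
      hginv_cd.comp 0 h1
    exact contDiffAt_snd.comp 0 h2
  · show (ginv (0, 1)).2 = 1
    rw [hginv0]
  · have htend : Filter.Tendsto (fun s : ℝ => ((s : ℝ), (1 : ℝ))) (nhds 0)
        (nhds ((0 : ℝ), (1 : ℝ))) := by
      exact (continuous_id.prodMk continuous_const).tendsto 0
    filter_upwards [htend.eventually hre] with s hs
    have h1 : (ginv (s, 1)).1 = s := congrArg Prod.fst hs
    have h2 : g (ginv (s, 1)) = 1 := congrArg Prod.snd hs
    have h3 : ((s : ℝ), (ginv (s, 1)).2) = ginv (s, 1) := Prod.ext h1.symm rfl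
    show g (s, (ginv (s, 1)).2) = 1
    rw [h3]
    exact h2


lemma mvt_abs {h h' : ℝ → ℝ} {a b δ : ℝ} (hδ : 0 < δ)
    (hd : ∀ u ∈ Set.Icc a b, HasDerivAt h (h' u) u)
    (hlb : ∀ u ∈ Set.Icc a b, δ ≤ h' u)
    {u v : ℝ} (hu : u ∈ Set.Icc a b) (hv : v ∈ Set.Icc a b) :
    δ * |u - v| ≤ |h u - h v| := by
  suffices H : ∀ u v : ℝ, u ∈ Set.Icc a b → v ∈ Set.Icc a b → u ≤ v →
      δ * (v - u) ≤ h v - h u by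
    rcases le_total u v with huv | huv
    · have := H u v hu hv huv
      rw [abs_of_nonpos (by linarith : u - v ≤ 0), abs_sub_comm, neg_sub]
      calc δ * (v - u) ≤ h v - h u := this
        _ ≤ |h v - h u| := le_abs_self _
    · have := H v u hv hu huv
      rw [abs_of_nonneg (by linarith)]
      calc δ * (u - v) ≤ h u - h v := this
        _ ≤ |h u - h v| := le_abs_self _
  intro u v hu hv huv
  rcases eq_or_lt_of_le huv with rfl | huv
  · simp
  have hsub : Set.Icc u v ⊆ Set.Icc a b := Set.Icc_subset_Icc hu.1 hv.2
  have hcont : ContinuousOn h (Set.Icc u v) := fun x hx =>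
    ((hd x (hsub hx)).continuousAt).continuousWithinAt
  have hderiv : ∀ x ∈ Set.Ioo u v, HasDerivAt h (h' x) x := fun x hx =>
    hd x (hsub (Set.Ioo_subset_Icc_self hx))
  obtain ⟨c, hc, hceq⟩ := exists_hasDerivAt_eq_slope h h' huv hcont hderiv
  have h1 : δ ≤ h' c := hlb c (hsub (Set.Ioo_subset_Icc_self hc))
  rw [hceq] at h1
  have hvu : (0:ℝ) < v - u := by linarith
  calc δ * (v - u) ≤ (h v - h u) / (v - u) * (v - u) := by
        apply mul_le_mul_of_nonneg_right h1 hvu.le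
    _ = h v - h u := by field_simp


lemma taylor_bound {φ : ℝ → ℝ} (hφ : ContDiffAt ℝ (⊤ : ℕ∞) φ 0) (N : ℕ) :
    ∃ c : ℕ → ℝ, c 0 = φ 0 ∧ ∃ δ C : ℝ, 0 < δ ∧ ∀ s ∈ Set.Icc (0:ℝ) δ,
      |φ s - ∑ j ∈ Finset.range (N + 1), c j * s ^ j| ≤ C * s ^ (N + 1) := by
  obtain ⟨u, hu, hcd⟩ := hφ.contDiffOn
    (m := ((N : ℕ∞) + 1 : ℕ∞)) (by exact_mod_cast le_top) (by simp)
  obtain ⟨ε, hε, hball⟩ := Metric.mem_nhds_iff.mp hu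
  set δ : ℝ := ε / 2 with hδdef
  have hδ : 0 < δ := by positivity
  have hIcc : Set.Icc (0:ℝ) δ ⊆ u := by
    refine subset_trans ?_ hball
    intro x hx
    simp only [Metric.mem_ball, Real.dist_eq, sub_zero]
    rw [abs_of_nonneg hx.1]
    linarith [hx.2]
  have hcd' : ContDiffOn ℝ ((N : ℕ) + 1) φ (Set.Icc (0:ℝ) δ) := by
    apply hcd.mono hIcc |>.of_le
    norm_cast
  obtain ⟨C, hC⟩ := exists_taylor_mean_remainder_bound hδ.le hcd'
  refine ⟨fun j => ((Nat.factorial j : ℝ)⁻¹) * iteratedDerivWithin j φ (Set.Icc (0:ℝ) δ) 0, by simp, δ, C,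
    hδ, fun s hs => ?_⟩
  have := hC s hs
  rw [taylor_within_apply] at this
  simp only [Real.norm_eq_abs, sub_zero] at this
  convert this using 3
  apply Finset.sum_congr rfl
  intro j _
  rw [smul_eq_mul]
  ring



lemma aux_rho_pow {l E : ℝ} (hl : 1 ≤ l) (hE : 0 < E) :
    (E ^ (1 / (2 * l))) ^ (2 * l) = E := by
  have h2l : (2 * l) ≠ 0 := by positivity
  rw [← Real.rpow_mul hE.le]
  rw [show 1 / (2 * l) * (2 * l) = 1 by field_simp]
  exact Real.rpow_one E

lemma aux_mul_rpow {l E x : ℝ} (hl : 1 ≤ l) (hE : 0 < E) (hx : 0 ≤ x) :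
    (x * E ^ (-(1 / (2 * l)))) ^ (2 * l) = x ^ (2 * l) / E := by
  have h2l : (2 * l) ≠ 0 := by positivity
  rw [Real.mul_rpow hx (Real.rpow_nonneg hE.le _), ← Real.rpow_mul hE.le,
    show -(1 / (2 * l)) * (2 * l) = -1 by field_simp, Real.rpow_neg_one]
  rw [div_eq_mul_inv]

lemma aux_rpow_bound {u a : ℝ} (hu : u ∈ Set.Icc (1/2 : ℝ) 2) : u ^ a ≤ 2 ^ |a| := by
  have hu0 : (0:ℝ) < u := lt_of_lt_of_le (by norm_num) hu.1
  rcases le_total 0 a with ha | ha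
  · calc u ^ a ≤ 2 ^ a := Real.rpow_le_rpow hu0.le hu.2 ha
      _ ≤ 2 ^ |a| := Real.rpow_le_rpow_of_exponent_le one_le_two (le_abs_self a)
  · calc u ^ a ≤ (1/2 : ℝ) ^ a := Real.rpow_le_rpow_of_nonpos (by norm_num) hu.1 ha
      _ = 2 ^ (-a) := by
          rw [show (1/2 : ℝ) = 2⁻¹ by norm_num, ← Real.rpow_neg_one,
            ← Real.rpow_mul (by norm_num : (0:ℝ) ≤ 2)]
          ring_nf
      _ = 2 ^ |a| := by rw [abs_of_nonpos ha]

lemma aux_small {c τ : ℝ} (hc : 0 < c) (hτ : 0 < τ) :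
    ∃ R : ℝ, 1 ≤ R ∧ ∀ E : ℝ, R ≤ E → 0 < E ∧ E ^ (-c) ≤ τ := by
  refine ⟨max 1 ((τ⁻¹) ^ (1/c) + 1), le_max_left _ _, fun E hE => ?_⟩
  have hE1 : (1:ℝ) ≤ E := le_trans (le_max_left _ _) hE
  have hE0 : (0:ℝ) < E := lt_of_lt_of_le one_pos hE1
  refine ⟨hE0, ?_⟩
  have hτi : (0:ℝ) < τ⁻¹ := by positivity
  have hbase : (τ⁻¹) ^ (1/c) ≤ E := by
    have := le_trans (le_max_right 1 ((τ⁻¹) ^ (1/c) + 1)) hE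
    linarith
  have h1 : τ⁻¹ ≤ E ^ c := by
    calc τ⁻¹ = ((τ⁻¹) ^ (1/c)) ^ c := by
          rw [← Real.rpow_mul hτi.le, one_div, inv_mul_cancel₀ hc.ne', Real.rpow_one]
      _ ≤ E ^ c := Real.rpow_le_rpow (Real.rpow_nonneg hτi.le _) hbase hc.le
  rw [Real.rpow_neg hE0.le]
  rw [inv_le_comm₀ (Real.rpow_pos_of_pos hE0 c) hτ] at *
  exact h1


lemma jap_one_le (x : ℝ) : 1 ≤ jap x := by
  have h := Real.sqrt_le_sqrt (show (1:ℝ) ≤ 1 + x ^ 2 by nlinarith [sq_nonneg x])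
  rwa [Real.sqrt_one] at h

lemma jap_mono {a b : ℝ} (h : |a| ≤ b) : jap a ≤ jap b := by
  apply Real.sqrt_le_sqrt
  have : a ^ 2 ≤ b ^ 2 := by
    rw [← sq_abs a]
    exact pow_le_pow_left₀ (abs_nonneg a) h 2
  linarith

lemma escape {l : ℝ} (hl : 1 ≤ l) {V qM : ℝ → ℝ}
    (hg : ∃ C, ∀ x : ℝ, |V x| ≤ C * jap x ^ (2 * l))
    (hqM : IsTurningPoint V qM) (M : ℝ) :
    ∃ R : ℝ, ∀ E, R ≤ E → 1 ≤ E ∧ V 0 < E ∧ M ≤ qM E ∧ 0 < qM E ∧ V (qM E) = E := by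
  obtain ⟨C, hC⟩ := hg
  have hC0 : 0 ≤ C := by
    have h0 := hC 0
    have hj : (0:ℝ) < jap 0 ^ (2 * l) :=
      Real.rpow_pos_of_pos (lt_of_lt_of_le one_pos (jap_one_le 0)) _
    nlinarith [abs_nonneg (V 0)]
  refine ⟨max (max 1 (|V 0| + 1)) (C * jap (max M 0) ^ (2 * l) + 1), fun E hE => ?_⟩
  have h1 : (1:ℝ) ≤ E := le_trans (le_trans (le_max_left _ _) (le_max_left _ _)) hE
  have hV0 : V 0 < E :=
    lt_of_lt_of_le (lt_of_le_of_lt (le_abs_self _) (by linarith))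
      (le_trans (le_trans (le_max_right _ _) (le_max_left _ _)) hE)
  obtain ⟨hq, hVq, _⟩ := hqM E hV0
  refine ⟨h1, hV0, ?_, hq, hVq⟩
  by_contra hM
  push_neg at hM
  have habs : |qM E| ≤ max M 0 := by
    rw [abs_of_pos hq]
    exact le_max_of_le_left hM.le
  have hjap : jap (qM E) ≤ jap (max M 0) := jap_mono habs
  have hjap1 : (1:ℝ) ≤ jap (qM E) := jap_one_le _
  have h2 : E ≤ C * jap (max M 0) ^ (2 * l) := by
    calc E = V (qM E) := hVq.symm
      _ ≤ |V (qM E)| := le_abs_self _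
      _ ≤ C * jap (qM E) ^ (2 * l) := hC _
      _ ≤ C * jap (max M 0) ^ (2 * l) := by
          apply mul_le_mul_of_nonneg_left _ hC0
          exact Real.rpow_le_rpow (by linarith) hjap (by positivity)
  have h3 : C * jap (max M 0) ^ (2 * l) + 1 ≤ E :=
    le_trans (le_max_right _ _) hE
  linarith


set_option maxHeartbeats 1000000 in
lemma u_close {l : ℝ} (hl : 1 ≤ l) {V qM : ℝ → ℝ}
    (hb : ∃ C₀ R₀ : ℝ, ∀ x : ℝ, R₀ ≤ |x| → |V x - |x| ^ (2 * l)| ≤ C₀ * |x| ^ (2 * l - 2))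
    (hesc : ∀ M : ℝ, ∃ R, ∀ E, R ≤ E →
      1 ≤ E ∧ V 0 < E ∧ M ≤ qM E ∧ 0 < qM E ∧ V (qM E) = E)
    {ε : ℝ} (hε : 0 < ε) :
    ∃ R, ∀ E, R ≤ E → 1 ≤ E ∧ 0 < qM E ∧ V (qM E) = E ∧
      |qM E * E ^ (-(1 / (2 * l))) - 1| ≤ ε := by
  obtain ⟨C₀, R₀, hC₀⟩ := hb
  have hl0 : (0:ℝ) < l := lt_of_lt_of_le one_pos hl
  -- continuity of t ↦ t^(1/(2l)) at 1
  have hcont : ContinuousAt (fun t : ℝ => t ^ (1 / (2 * l))) 1 :=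
    Real.continuousAt_rpow_const 1 _ (Or.inl one_ne_zero)
  obtain ⟨η, hη, hηimp⟩ := Metric.continuousAt_iff.mp hcont ε hε
  set D : ℝ := max C₀ 1 with hD
  have hD1 : (1:ℝ) ≤ D := le_max_right _ _
  have hD0 : (0:ℝ) < D := lt_of_lt_of_le one_pos hD1
  set X : ℝ := max (max R₀ 1) (max (Real.sqrt (2 * D) + 1) (Real.sqrt (2 * D / η) + 1)) with hX
  obtain ⟨R, hR⟩ := hesc X
  refine ⟨R, fun E hE => ?_⟩
  obtain ⟨hE1, hV0, hXq, hq, hVq⟩ := hR E hE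
  have hE0 : (0:ℝ) < E := lt_of_lt_of_le one_pos hE1
  set x : ℝ := qM E with hxdef
  have hx1 : (1:ℝ) ≤ x := le_trans (le_trans (le_max_right _ _) (le_max_left _ _)) hXq
  have hx0 : (0:ℝ) < x := lt_of_lt_of_le one_pos hx1
  refine ⟨hE1, hq, hVq, ?_⟩
  -- the bound from the expansion
  have hxR : R₀ ≤ |x| := by
    rw [abs_of_pos hx0]
    exact le_trans (le_trans (le_max_left _ _) (le_max_left _ _)) hXq
  have h1 := hC₀ x hxR
  rw [abs_of_pos hx0, hVq] at h1
  -- h1 : |E - x ^ (2l)| ≤ C₀ * x ^ (2l - 2)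
  have hsplit : x ^ (2 * l - 2) = x ^ (2 * l) * x ^ (-2 : ℝ) := by
    rw [← Real.rpow_add hx0]; ring_nf
  have hxm2 : x ^ (-2:ℝ) = (x ^ 2)⁻¹ := by
    rw [Real.rpow_neg hx0.le, Real.rpow_two]
  have hx2pos : (0:ℝ) < x ^ 2 := by positivity
  set T : ℝ := x ^ (2 * l) / E with hT
  have hTpos : 0 < T := div_pos (Real.rpow_pos_of_pos hx0 _) hE0
  -- |T - 1| ≤ D * T * x⁻²
  have h2 : |T - 1| ≤ D * T * (x ^ 2)⁻¹ := by
    have e1 : |T - 1| = |E - x ^ (2*l)| / E := by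
      rw [← abs_of_pos hE0, ← abs_div, abs_of_pos hE0, abs_sub_comm]
      congr 1
      field_simp [hT]
      rw [hT, sub_mul, div_mul_cancel₀ _ hE0.ne']; ring
    rw [e1, div_le_iff₀ hE0]
    calc |E - x ^ (2*l)| ≤ C₀ * x ^ (2*l-2) := h1
      _ ≤ D * x ^ (2*l-2) := by
          apply mul_le_mul_of_nonneg_right (le_max_left _ _)
          exact (Real.rpow_pos_of_pos hx0 _).le
      _ = D * T * (x^2)⁻¹ * E := by
          rw [hsplit, hxm2, hT]
          field_simp
  -- x² is large
  have hxs1 : Real.sqrt (2 * D) + 1 ≤ x := le_trans (le_trans (le_max_left _ _) (le_max_right _ _)) hXq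
  have hxs2 : Real.sqrt (2 * D / η) + 1 ≤ x := le_trans (le_trans (le_max_right _ _) (le_max_right _ _)) hXq
  have hsq1 : 2 * D ≤ x ^ 2 := by
    have h := Real.sq_sqrt (by positivity : (0:ℝ) ≤ 2 * D)
    have h2 : Real.sqrt (2 * D) ≤ x := by linarith
    nlinarith [Real.sqrt_nonneg (2 * D)]
  have hsq2 : 2 * D / η < x ^ 2 := by
    have h := Real.sq_sqrt (by positivity : (0:ℝ) ≤ 2 * D / η)
    have h2 : Real.sqrt (2 * D / η) + 1 ≤ x := hxs2
    nlinarith [Real.sqrt_nonneg (2 * D / η)]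
  -- T ≤ 2
  have hT2 : T ≤ 2 := by
    have hhalf : D * (x ^ 2)⁻¹ ≤ 1/2 := by
      rw [← div_eq_mul_inv, div_le_iff₀ hx2pos]
      linarith
    have h3 : T - 1 ≤ D * T * (x^2)⁻¹ := le_trans (le_abs_self _) h2
    have h4 : D * T * (x^2)⁻¹ = (D * (x^2)⁻¹) * T := by ring
    have h5 : (D * (x^2)⁻¹) * T ≤ (1/2) * T := mul_le_mul_of_nonneg_right hhalf hTpos.le
    linarith
  -- |T - 1| < η
  have hTη : |T - 1| < η := by
    have : D * T * (x ^ 2)⁻¹ < η := by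
      rw [div_lt_iff₀ hη] at hsq2
      have hx2inv : (x^2)⁻¹ * (2 * D) < η := by
        rw [mul_comm, ← div_eq_mul_inv, div_lt_iff₀ hx2pos]
        linarith
      have hinv : (0:ℝ) < (x^2)⁻¹ := inv_pos.mpr hx2pos
      calc D * T * (x^2)⁻¹ = T * (D * (x^2)⁻¹) := by ring
        _ ≤ 2 * (D * (x^2)⁻¹) := mul_le_mul_of_nonneg_right hT2 (mul_nonneg hD0.le hinv.le)
        _ = (x^2)⁻¹ * (2 * D) := by ring
        _ < η := hx2inv
    linarith [h2]
  -- conclude via continuity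
  have hu2l : (x * E ^ (-(1 / (2 * l)))) ^ (2 * l) = T := aux_mul_rpow hl hE0 hx0.le
  have hupos : 0 < x * E ^ (-(1 / (2 * l))) :=
    mul_pos hx0 (Real.rpow_pos_of_pos hE0 _)
  have hux : x * E ^ (-(1 / (2 * l))) = T ^ (1 / (2 * l)) := by
    rw [← hu2l]
    rw [← Real.rpow_mul hupos.le]
    rw [show 2 * l * (1 / (2 * l)) = 1 by field_simp]
    · exact (Real.rpow_one _).symm
  have := hηimp (show dist T 1 < η by rwa [Real.dist_eq])
  rw [Real.dist_eq, Real.one_rpow] at this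
  rw [hux]
  exact this.le


lemma Gprime_lb {l : ℝ} (hl : 1 ≤ l) {N : ℕ} {Vh : ℕ → ℝ → ℝ}
    (hVhcd : ∀ j, 1 ≤ j → ContDiffOn ℝ (⊤ : ℕ∞) (Vh j) {x : ℝ | x ≠ 0}) :
    ∃ s₀ δG : ℝ, 0 < s₀ ∧ s₀ ≤ 1 ∧ 0 < δG ∧ ∀ s : ℝ, 0 ≤ s → s ≤ s₀ →
      ∀ u v : ℝ, u ∈ Set.Icc (1/2 : ℝ) 2 → v ∈ Set.Icc (1/2 : ℝ) 2 →
        δG * |u - v| ≤ |(u ^ (2*l) + ∑ j ∈ Finset.Icc 1 N, s ^ j * Vh j u)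
          - (v ^ (2*l) + ∑ j ∈ Finset.Icc 1 N, s ^ j * Vh j v)| := by
  have hl0 : (0:ℝ) < l := lt_of_lt_of_le one_pos hl
  have hopen : IsOpen {x : ℝ | x ≠ 0} := isOpen_ne
  have hKsub : Set.Icc (1/2 : ℝ) 2 ⊆ {x : ℝ | x ≠ 0} := fun x hx =>
    ne_of_gt (lt_of_lt_of_le (by norm_num) hx.1)
  have hBj : ∀ j : ℕ, ∃ B : ℝ, 0 ≤ B ∧
      (1 ≤ j → ∀ x ∈ Set.Icc (1/2 : ℝ) 2, |deriv (Vh j) x| ≤ B) := by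
    intro j
    by_cases hj : 1 ≤ j
    · have hcont : ContinuousOn (deriv (Vh j)) (Set.Icc (1/2 : ℝ) 2) :=
        ((hVhcd j hj).continuousOn_deriv_of_isOpen hopen (by exact_mod_cast le_top)).mono hKsub
      obtain ⟨B, hB⟩ := isCompact_Icc.exists_bound_of_continuousOn hcont
      exact ⟨max B 0, le_max_right _ _, fun _ x hx => le_trans (hB x hx) (le_max_left _ _)⟩
    · exact ⟨0, le_rfl, fun h => absurd h hj⟩
  choose B hB0 hB using hBj
  set Btot : ℝ := ∑ j ∈ Finset.Icc 1 N, B j with hBtotdef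
  have hBtot0 : 0 ≤ Btot := Finset.sum_nonneg fun j _ => hB0 j
  have hVhderiv : ∀ j, 1 ≤ j → ∀ x ∈ Set.Icc (1/2 : ℝ) 2,
      HasDerivAt (Vh j) (deriv (Vh j) x) x := by
    intro j hj x hx
    have hcd : ContDiffAt ℝ (⊤ : ℕ∞) (Vh j) x :=
      (hVhcd j hj).contDiffAt (hopen.mem_nhds (hKsub hx))
    exact (hcd.differentiableAt (by simp)).hasDerivAt
  set δ₀ : ℝ := (1/2 : ℝ) ^ (2*l - 1) with hδ₀def
  have hδ₀ : 0 < δ₀ := Real.rpow_pos_of_pos (by norm_num) _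
  refine ⟨min 1 (l * δ₀ / (Btot + 1)), l * δ₀, lt_min one_pos (by positivity),
    min_le_left _ _, by positivity, ?_⟩
  intro s hs hss u v hu hv
  set s₀ : ℝ := min 1 (l * δ₀ / (Btot + 1)) with hs₀def
  have hs₀pos : 0 < s₀ := lt_min one_pos (by positivity)
  -- apply the MVT lemma
  apply mvt_abs (h' := fun u => 2*l * u ^ (2*l - 1) + ∑ j ∈ Finset.Icc 1 N, s ^ j * deriv (Vh j) u)
    (by positivity : (0:ℝ) < l * δ₀) _ _ hu hv
  · intro w hw
    have hw0 : w ≠ 0 := hKsub hw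
    have h1 : HasDerivAt (fun w : ℝ => w ^ (2*l)) (2*l * w ^ (2*l-1)) w :=
      Real.hasDerivAt_rpow_const (Or.inl hw0)
    have h2 : HasDerivAt (fun w => ∑ j ∈ Finset.Icc 1 N, s ^ j * Vh j w)
        (∑ j ∈ Finset.Icc 1 N, s ^ j * deriv (Vh j) w) w := by
      apply HasDerivAt.fun_sum
      intro j hj
      exact (hVhderiv j (Finset.mem_Icc.mp hj).1 w hw).const_mul _
    exact h1.add h2
  · intro w hw
    have h1 : 2*l*δ₀ ≤ 2*l * w ^ (2*l-1) := by
      apply mul_le_mul_of_nonneg_left _ (by positivity)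
      exact Real.rpow_le_rpow (by norm_num) hw.1 (by linarith)
    have h2 : |∑ j ∈ Finset.Icc 1 N, s ^ j * deriv (Vh j) w| ≤ s₀ * Btot := by
      calc |∑ j ∈ Finset.Icc 1 N, s ^ j * deriv (Vh j) w|
          ≤ ∑ j ∈ Finset.Icc 1 N, |s ^ j * deriv (Vh j) w| := Finset.abs_sum_le_sum_abs _ _
        _ ≤ ∑ j ∈ Finset.Icc 1 N, s₀ * B j := by
            apply Finset.sum_le_sum
            intro j hj
            have hj1 := (Finset.mem_Icc.mp hj).1
            rw [abs_mul, abs_pow, abs_of_nonneg hs]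
            have hsle : s ^ j ≤ s₀ := by
              calc s ^ j ≤ s ^ 1 :=
                    pow_le_pow_of_le_one hs (le_trans hss (min_le_left _ _)) hj1
                _ = s := pow_one s
                _ ≤ s₀ := hss
            exact mul_le_mul hsle (hB j hj1 w hw) (abs_nonneg _) hs₀pos.le
        _ = s₀ * Btot := by rw [← Finset.mul_sum]
    have h3 : s₀ * Btot ≤ l * δ₀ := by
      have hm : s₀ ≤ l * δ₀ / (Btot + 1) := min_le_right _ _
      calc s₀ * Btot ≤ (l * δ₀ / (Btot + 1)) * Btot := mul_le_mul_of_nonneg_right hm hBtot0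
        _ ≤ l * δ₀ := by
            rw [div_mul_eq_mul_div, div_le_iff₀ (by positivity)]
            nlinarith
    have h4 := (abs_le.mp h2).1
    have h5 : l * δ₀ ≤ 2*l*δ₀ - s₀ * Btot := by nlinarith
    show l * δ₀ ≤ 2 * l * w ^ (2*l-1) + ∑ j ∈ Finset.Icc 1 N, s ^ j * deriv (Vh j) w
    linarith

lemma exists_phi {l : ℝ} (hl : 1 ≤ l) {N : ℕ} {Vh : ℕ → ℝ → ℝ}
    (hVhcd : ∀ j, 1 ≤ j → ContDiffOn ℝ (⊤ : ℕ∞) (Vh j) {x : ℝ | x ≠ 0}) :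
    ∃ φ : ℝ → ℝ, ContDiffAt ℝ (⊤ : ℕ∞) φ 0 ∧ φ 0 = 1 ∧
      ∀ᶠ s in nhds (0 : ℝ),
        ((φ s) ^ (2*l) + ∑ j ∈ Finset.Icc 1 N, s ^ j * Vh j (φ s) = 1 ∧
          φ s ∈ Set.Icc (1/2 : ℝ) 2) := by
  have hl0 : (0:ℝ) < l := lt_of_lt_of_le one_pos hl
  have hopen : IsOpen {x : ℝ | x ≠ 0} := isOpen_ne
  set g : ℝ × ℝ → ℝ := fun p => p.2 ^ (2*l) + ∑ j ∈ Finset.Icc 1 N, p.1 ^ j * Vh j p.2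
    with hgdef
  have hg : ContDiffAt ℝ (⊤ : ℕ∞) g (0, 1) := by
    apply ContDiffAt.add
    · exact (Real.contDiffAt_rpow_const_of_ne (p := 2*l) (one_ne_zero : (1:ℝ) ≠ 0)).comp ((0:ℝ), (1:ℝ)) contDiffAt_snd
    · apply ContDiffAt.sum
      intro j hj
      apply ContDiffAt.mul
      · exact contDiffAt_fst.pow j
      · have h1 : ContDiffAt ℝ (⊤ : ℕ∞) (Vh j) 1 :=
          (hVhcd j (Finset.mem_Icc.mp hj).1).contDiffAt
            (hopen.mem_nhds (by norm_num : (1:ℝ) ≠ 0))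
        exact h1.comp (0, 1) contDiffAt_snd
  have hgval : g (0, 1) = 1 := by
    simp only [hgdef]
    rw [Real.one_rpow]
    have : ∀ j ∈ Finset.Icc 1 N, ((0:ℝ), (1:ℝ)).1 ^ j * Vh j ((0:ℝ), (1:ℝ)).2 = 0 := by
      intro j hj
      have := (Finset.mem_Icc.mp hj).1
      simp [zero_pow (by omega : j ≠ 0)]
    rw [Finset.sum_congr rfl this]
    simp
  have hslice : HasDerivAt (fun u : ℝ => g (0, u)) (2*l) 1 := by
    have heq : (fun u : ℝ => g (0, u)) = fun u : ℝ => u ^ (2*l) := by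
      funext u
      simp only [hgdef]
      have : ∀ j ∈ Finset.Icc 1 N, (0:ℝ) ^ j * Vh j u = 0 := by
        intro j hj
        have := (Finset.mem_Icc.mp hj).1
        simp [zero_pow (by omega : j ≠ 0)]
      rw [Finset.sum_congr rfl this]
      simp
    rw [heq]
    have h := Real.hasDerivAt_rpow_const (p := 2*l) (Or.inl (one_ne_zero : (1:ℝ) ≠ 0))
    rw [Real.one_rpow] at h
    simpa using h
  obtain ⟨φ, hφcd, hφ0, hφeq⟩ := implicit_one_dim hg hgval hslice (by positivity)
  refine ⟨φ, hφcd, hφ0, ?_⟩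
  have hcont : ContinuousAt φ 0 := hφcd.continuousAt
  have hmem : ∀ᶠ s in nhds (0:ℝ), φ s ∈ Set.Icc (1/2 : ℝ) 2 := by
    have : Set.Icc (1/2 : ℝ) 2 ∈ nhds (φ 0) := by
      rw [hφ0]
      apply Icc_mem_nhds <;> norm_num
    exact hcont.eventually_mem this
  filter_upwards [hφeq, hmem] with s h1 h2
  exact ⟨h1, h2⟩


set_option maxHeartbeats 1000000 in
lemma eq_bound {l : ℝ} (hl : 1 ≤ l) {V qM : ℝ → ℝ} {N : ℕ} {Vh : ℕ → ℝ → ℝ}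
    (hhom : ∀ j, 1 ≤ j → ∀ ρ : ℝ, 0 < ρ → ∀ x, Vh j (ρ * x) = ρ ^ (2*l - 2*(j:ℝ)) * Vh j x)
    (hb0 : ∃ C₀ R₀ : ℝ, ∀ x : ℝ, R₀ ≤ |x| → |V x - |x| ^ (2*l)| ≤ C₀ * |x| ^ (2*l - 2))
    (hbN : ∃ C R : ℝ, ∀ x : ℝ, R ≤ |x| →
      |V x - |x| ^ (2*l) - ∑ j ∈ Finset.Icc 1 N, Vh j x| ≤ C * |x| ^ (2*l - 2*((N:ℝ)+1)))
    (hesc : ∀ M : ℝ, ∃ R, ∀ E, R ≤ E →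
      1 ≤ E ∧ V 0 < E ∧ M ≤ qM E ∧ 0 < qM E ∧ V (qM E) = E) :
    ∃ Cq R : ℝ, ∀ E, R ≤ E → 0 < E ∧
      qM E * E ^ (-(1/(2*l))) ∈ Set.Icc (1/2:ℝ) 2 ∧
      |((qM E * E ^ (-(1/(2*l)))) ^ (2*l)
          + ∑ j ∈ Finset.Icc 1 N, (E ^ (-(1/l))) ^ j * Vh j (qM E * E ^ (-(1/(2*l))))) - 1|
        ≤ Cq * (E ^ (-(1/l))) ^ (N+1) := by
  have hl0 : (0:ℝ) < l := lt_of_lt_of_le one_pos hl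
  obtain ⟨C₁, R₁, hC₁⟩ := hbN
  obtain ⟨Ru, hRu⟩ := u_close hl hb0 hesc (by norm_num : (0:ℝ) < 1/2)
  obtain ⟨Re, hRe⟩ := hesc (max R₁ 1)
  set a : ℝ := 2*l - 2*((N:ℝ)+1) with hadef
  refine ⟨max C₁ 0 * 2 ^ |a|, max Ru Re, fun E hE => ?_⟩
  obtain ⟨hE1, hq, hVq, hu⟩ := hRu E (le_trans (le_max_left _ _) hE)
  obtain ⟨_, _, hxR₁, _, _⟩ := hRe E (le_trans (le_max_right _ _) hE)
  have hE0 : (0:ℝ) < E := lt_of_lt_of_le one_pos hE1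
  set x : ℝ := qM E with hxdef
  have hx0 : 0 < x := hq
  set u : ℝ := x * E ^ (-(1/(2*l))) with hudef
  have hu' : u ∈ Set.Icc (1/2:ℝ) 2 := by
    have h := abs_le.mp hu
    constructor <;> [linarith [h.1]; linarith [h.2]]
  refine ⟨hE0, hu', ?_⟩
  set s : ℝ := E ^ (-(1/l)) with hsdef
  set ρ : ℝ := E ^ (1/(2*l)) with hρdef
  have hρ0 : 0 < ρ := Real.rpow_pos_of_pos hE0 _
  have hρE : ρ ^ (2*l) = E := aux_rho_pow hl hE0
  have hu0 : 0 < u := mul_pos hx0 (Real.rpow_pos_of_pos hE0 _)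
  have h1 : ρ * E ^ (-(1/(2*l))) = 1 := by
    rw [hρdef, ← Real.rpow_add hE0, show 1/(2*l) + -(1/(2*l)) = 0 by ring, Real.rpow_zero]
  have hxρ : ρ * u = x := by
    calc ρ * u = x * (ρ * E ^ (-(1/(2*l)))) := by rw [hudef]; ring
      _ = x := by rw [h1, mul_one]
  have hEinv : E⁻¹ = ρ ^ (-(2*l)) := by
    rw [Real.rpow_neg hρ0.le, hρE]
  have hρpow : ∀ m : ℕ, ρ ^ (-(2*(m:ℝ))) = s ^ m := by
    intro m
    rw [hsdef, hρdef, ← Real.rpow_natCast (E ^ (-(1/l))) m, ← Real.rpow_mul hE0.le,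
      ← Real.rpow_mul hE0.le]
    congr 1
    field_simp
  have hterm : ∀ j ∈ Finset.Icc 1 N, Vh j x / E = s ^ j * Vh j u := by
    intro j hj
    have hj1 := (Finset.mem_Icc.mp hj).1
    rw [← hxρ, hhom j hj1 ρ hρ0 u, div_eq_mul_inv, hEinv]
    have h2 : ρ ^ (2*l - 2*(j:ℝ)) * Vh j u * ρ ^ (-(2*l)) = ρ ^ (-(2*(j:ℝ))) * Vh j u := by
      rw [mul_right_comm, ← Real.rpow_add hρ0,
        show 2*l - 2*(j:ℝ) + -(2*l) = -(2*(j:ℝ)) by ring]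
    rw [h2, hρpow j]
  have hu2l : u ^ (2*l) = x ^ (2*l) / E := aux_mul_rpow hl hE0 hx0.le
  have hxa : x ^ a / E = u ^ a * s ^ (N+1) := by
    rw [← hxρ, Real.mul_rpow hρ0.le hu0.le, div_eq_mul_inv, hEinv]
    have h2 : ρ ^ a * u ^ a * ρ ^ (-(2*l)) = u ^ a * ρ ^ (-(2*((N:ℝ)+1))) := by
      rw [mul_right_comm, ← Real.rpow_add hρ0,
        show a + -(2*l) = -(2*((N:ℝ)+1)) by rw [hadef]; ring]
      ring
    rw [h2]
    congr 1
    rw [show -(2*((N:ℝ)+1)) = -(2*(((N+1:ℕ)):ℝ)) by push_cast; ring]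
    exact hρpow (N+1)
  have hmain := hC₁ x (by rw [abs_of_pos hx0]; exact le_trans (le_max_left _ _) hxR₁)
  rw [abs_of_pos hx0, hVq] at hmain
  have hiden : (u ^ (2*l) + ∑ j ∈ Finset.Icc 1 N, s ^ j * Vh j u) - 1
      = -((E - x ^ (2*l) - ∑ j ∈ Finset.Icc 1 N, Vh j x) / E) := by
    rw [hu2l, ← Finset.sum_congr rfl hterm, ← Finset.sum_div]
    field_simp
    ring
  rw [hiden, abs_neg, abs_div, abs_of_pos hE0]
  have hs0 : (0:ℝ) < s := Real.rpow_pos_of_pos hE0 _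
  have hua : (0:ℝ) < u ^ a := Real.rpow_pos_of_pos hu0 _
  calc |E - x ^ (2*l) - ∑ j ∈ Finset.Icc 1 N, Vh j x| / E
      ≤ (C₁ * x ^ a) / E := by gcongr
    _ = C₁ * (x ^ a / E) := by ring
    _ = C₁ * (u ^ a * s ^ (N+1)) := by rw [hxa]
    _ ≤ max C₁ 0 * (u ^ a * s ^ (N+1)) := by
        apply mul_le_mul_of_nonneg_right (le_max_left _ _)
        positivity
    _ ≤ max C₁ 0 * (2 ^ |a| * s ^ (N+1)) := by
        apply mul_le_mul_of_nonneg_left _ (le_max_right _ _)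
        exact mul_le_mul_of_nonneg_right (aux_rpow_bound hu') (by positivity)
    _ = (max C₁ 0 * 2 ^ |a|) * s ^ (N+1) := by ring


/-- `q̄(E) = q_M(E)E^{-1/(2l)}` admits an asymptotic expansion in powers of
`E^{-1/l}` with first coefficient `1`. -/
theorem stmt5 (l : ℝ) (hl : 1 ≤ l) (V : ℝ → ℝ) (hV : GoodPotential l V)
    (qM : ℝ → ℝ) (hqM : IsTurningPoint V qM) :
    ∀ N : ℕ, ∃ c : ℕ → ℝ, c 0 = 1 ∧ ∃ C R : ℝ, ∀ E : ℝ, R ≤ E →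
      |qM E * E ^ (-(1 / (2 * l)))
          - ∑ j ∈ Finset.range (N + 1), c j * E ^ (-(j : ℝ) / l)|
        ≤ C * E ^ (-((N : ℝ) + 1) / l) := by
  
  intro N
  have hl0 : (0:ℝ) < l := lt_of_lt_of_le one_pos hl
  obtain ⟨Vh, hVhs, hexp⟩ := hV.expansion
  have hVhcd : ∀ j, 1 ≤ j → ContDiffOn ℝ (⊤ : ℕ∞) (Vh j) {x : ℝ | x ≠ 0} :=
    fun j hj => (hVhs j hj).1
  have hhom : ∀ j, 1 ≤ j → ∀ ρ : ℝ, 0 < ρ → ∀ x, Vh j (ρ * x) = ρ ^ (2*l - 2*(j:ℝ)) * Vh j x :=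
    fun j hj => (hVhs j hj).2
  have hgrow : ∃ C, ∀ x : ℝ, |V x| ≤ C * jap x ^ (2 * l) := by
    obtain ⟨C, hC⟩ := hV.growth 0
    refine ⟨C, fun x => ?_⟩
    have h := hC x
    rwa [iteratedDeriv_zero, Nat.cast_zero, sub_zero] at h
  have hesc := escape hl hgrow hqM
  have hb0 : ∃ C₀ R₀ : ℝ, ∀ x : ℝ, R₀ ≤ |x| → |V x - |x| ^ (2*l)| ≤ C₀ * |x| ^ (2*l - 2) := by
    obtain ⟨C₀, R₀, h⟩ := hexp 0 0
    refine ⟨C₀, R₀, fun x hx => ?_⟩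
    have h2 := h x hx
    rw [iteratedDeriv_zero] at h2
    simp only [Finset.Icc_eq_empty (by norm_num : ¬(1:ℕ) ≤ 0), Finset.sum_empty, sub_zero] at h2
    convert h2 using 3
    norm_num
  have hbN : ∃ C R : ℝ, ∀ x : ℝ, R ≤ |x| →
      |V x - |x| ^ (2*l) - ∑ j ∈ Finset.Icc 1 N, Vh j x| ≤ C * |x| ^ (2*l - 2*((N:ℝ)+1)) := by
    obtain ⟨C, R, h⟩ := hexp N 0
    refine ⟨C, R, fun x hx => ?_⟩
    have h2 := h x hx
    rw [iteratedDeriv_zero] at h2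
    convert h2 using 3
    norm_num
  obtain ⟨s₀, δG, hs₀pos, hs₀le1, hδG, hGlb⟩ := Gprime_lb hl (N := N) hVhcd
  obtain ⟨φ, hφcd, hφ0, hφev⟩ := exists_phi hl (N := N) hVhcd
  obtain ⟨Cq, Rq, hCq⟩ := eq_bound hl hhom hb0 hbN hesc
  obtain ⟨c, hc0, δ₃, C₃, hδ₃, hTay⟩ := taylor_bound hφcd N
  rw [hφ0] at hc0
  obtain ⟨δ₁, hδ₁, hδ₁imp⟩ := Metric.eventually_nhds_iff.mp hφev
  obtain ⟨Rs, hRs1, hRs⟩ := aux_small (c := 1/l) (τ := min s₀ (min δ₃ (δ₁/2)))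
    (by positivity) (lt_min hs₀pos (lt_min hδ₃ (by linarith)))
  refine ⟨c, hc0, Cq / δG + C₃, max Rq Rs, fun E hE => ?_⟩
  obtain ⟨hE0, huK, hEq⟩ := hCq E (le_trans (le_max_left _ _) hE)
  obtain ⟨-, hsmall⟩ := hRs E (le_trans (le_max_right _ _) hE)
  set s : ℝ := E ^ (-(1/l)) with hsdef
  have hs0 : 0 < s := Real.rpow_pos_of_pos hE0 _
  have hss₀ : s ≤ s₀ := le_trans hsmall (min_le_left _ _)
  have hsδ₃ : s ≤ δ₃ := le_trans hsmall (le_trans (min_le_right _ _) (min_le_left _ _))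
  have hsδ₁ : s < δ₁ :=
    lt_of_le_of_lt (le_trans hsmall (le_trans (min_le_right _ _) (min_le_right _ _)))
      (by linarith)
  obtain ⟨hφeq, hφK⟩ := hδ₁imp
    (show dist s 0 < δ₁ by rw [Real.dist_eq, sub_zero, abs_of_pos hs0]; exact hsδ₁)
  set u : ℝ := qM E * E ^ (-(1/(2*l))) with hudef
  have h2 : δG * |u - φ s| ≤ Cq * s ^ (N+1) := by
    calc δG * |u - φ s|
        ≤ |(u ^ (2*l) + ∑ j ∈ Finset.Icc 1 N, s ^ j * Vh j u)
            - ((φ s) ^ (2*l) + ∑ j ∈ Finset.Icc 1 N, s ^ j * Vh j (φ s))| :=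
          hGlb s hs0.le hss₀ u (φ s) huK hφK
      _ = |(u ^ (2*l) + ∑ j ∈ Finset.Icc 1 N, s ^ j * Vh j u) - 1| := by rw [hφeq]
      _ ≤ Cq * s ^ (N+1) := hEq
  have h3 : |u - φ s| ≤ (Cq / δG) * s ^ (N+1) := by
    rw [div_mul_eq_mul_div, le_div_iff₀ hδG]
    calc |u - φ s| * δG = δG * |u - φ s| := by ring
      _ ≤ Cq * s ^ (N+1) := h2
  have h4 := hTay s ⟨hs0.le, hsδ₃⟩
  have hsj : ∀ j : ℕ, E ^ (-(j:ℝ)/l) = s ^ j := by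
    intro j
    rw [hsdef, ← Real.rpow_natCast (E ^ (-(1/l))) j, ← Real.rpow_mul hE0.le]
    congr 1
    ring
  have hsum : ∑ j ∈ Finset.range (N+1), c j * E ^ (-(j:ℝ)/l)
      = ∑ j ∈ Finset.range (N+1), c j * s ^ j := by
    refine Finset.sum_congr rfl fun j _ => ?_
    rw [hsj j]
  have hsN : E ^ (-((N:ℝ)+1)/l) = s ^ (N+1) := by
    rw [show -((N:ℝ)+1)/l = -(((N+1:ℕ)):ℝ)/l by push_cast; ring, hsj (N+1)]
  rw [hsum, hsN]
  calc |u - ∑ j ∈ Finset.range (N+1), c j * s ^ j|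
      ≤ |u - φ s| + |φ s - ∑ j ∈ Finset.range (N+1), c j * s ^ j| := abs_sub_le _ _ _
    _ ≤ (Cq / δG) * s ^ (N+1) + C₃ * s ^ (N+1) := add_le_add h3 h4
    _ = (Cq / δG + C₃) * s ^ (N+1) := by ring
end
end

section
/- Let d ≥ 1 and let Φ : ℝ × ℝ^d → ℝ^d be continuous with Φ(0,w) = w and Φ(t+s,w) = Φ(t,Φ(s,w)) for all t,s,w. Let z ∈ ℝ^d, T > 0 with Φ(T,z) = z, let α ∈ ℝ with e^{iαT} ≠ 1, and let g : ℝ^d → ℂ be continuous. Define χ(s) := (e^{iαT} − 1)^{−1} ∫₀^T e^{iαt} g(Φ(t+s,z)) dt. Then χ is differentiable at s = 0 and χ′(0) + iα·χ(0) = g(z). (This verifies that the Fourier coefficient formula χ_k := (e^{iω·kT}−1)^{−1}∫₀^T e^{iω·kt} p_k∘Φ^t dt solves the twisted homological equation along the flow.) -/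
open Real MeasureTheory intervalIntegral

noncomputable section

/-- `χ(s) = (e^{iαT} - 1)⁻¹ ∫₀^T e^{iαt} g(Φ(t+s,z)) dt`. -/
def chiTw (d : ℕ) (Φ : ℝ → (Fin d → ℝ) → (Fin d → ℝ)) (z : Fin d → ℝ)
    (T α : ℝ) (g : (Fin d → ℝ) → ℂ) (s : ℝ) : ℂ :=
  (Complex.exp (α * T * Complex.I) - 1)⁻¹ *
    ∫ t in (0:ℝ)..T, Complex.exp (α * t * Complex.I) * g (Φ (t + s) z)

/-- the Fourier-coefficient formula solves the twisted homological equation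
along the flow: `χ` is differentiable at `0` and `χ'(0) + iα χ(0) = g(z)`. -/
theorem stmt8 (d : ℕ) (hd : 1 ≤ d)
    (Φ : ℝ → (Fin d → ℝ) → (Fin d → ℝ))
    (hΦc : Continuous fun q : ℝ × (Fin d → ℝ) => Φ q.1 q.2)
    (hΦ0 : ∀ w : Fin d → ℝ, Φ 0 w = w)
    (hΦgp : ∀ t s : ℝ, ∀ w : Fin d → ℝ, Φ (t + s) w = Φ t (Φ s w))
    (z : Fin d → ℝ) (T : ℝ) (hT : 0 < T) (hper : Φ T z = z)
    (α : ℝ) (hα : Complex.exp (α * T * Complex.I) ≠ 1)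
    (g : (Fin d → ℝ) → ℂ) (hg : Continuous g) :
    HasDerivAt (chiTw d Φ z T α g)
      (g z - Complex.I * α * chiTw d Φ z T α g 0) 0 := by
  set c : ℂ := Complex.exp (α * T * Complex.I) - 1 with hc_def
  have hc : c ≠ 0 := sub_ne_zero.mpr hα
  set h : ℝ → ℂ := fun u => Complex.exp (α * u * Complex.I) * g (Φ u z) with hh
  have hhc : Continuous h := by
    apply Continuous.mul
    · exact Complex.continuous_exp.comp
        ((continuous_const.mul Complex.continuous_ofReal).mul continuous_const)
    · exact hg.comp (hΦc.comp (continuous_id.prodMk continuous_const))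
  set H : ℝ → ℂ := fun x => ∫ u in (0:ℝ)..x, h u with hH
  have hHd : ∀ x, HasDerivAt H (h x) x := fun x =>
    intervalIntegral.integral_hasDerivAt_right (hhc.intervalIntegrable 0 x)
      (hhc.stronglyMeasurableAtFilter _ _) hhc.continuousAt
  have hrepr : ∀ s : ℝ, chiTw d Φ z T α g s =
      c⁻¹ * (Complex.exp ((-(α:ℂ) * Complex.I) * s) * (H (T + s) - H s)) := by
    intro s
    unfold chiTw
    rw [← hc_def]
    congr 1
    have key : ∀ t : ℝ, Complex.exp (α * t * Complex.I) * g (Φ (t + s) z)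
        = Complex.exp ((-(α:ℂ) * Complex.I) * s) * h (t + s) := by
      intro t
      rw [hh]
      simp only
      rw [← mul_assoc, ← Complex.exp_add]
      congr 2
      push_cast
      ring
    simp only [key]
    rw [intervalIntegral.integral_const_mul, intervalIntegral.integral_comp_add_right h s,
      zero_add]
    congr 1
    rw [hH]
    simp only
    rw [intervalIntegral.integral_interval_sub_left (hhc.intervalIntegrable 0 (T+s))
      (hhc.intervalIntegrable 0 s)]
  rw [funext hrepr]
  have h1 : HasDerivAt (fun s : ℝ => (s : ℂ)) 1 (0:ℝ) := by
    simpa using (hasDerivAt_id (0:ℝ)).ofReal_comp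
  have hE : HasDerivAt (fun s : ℝ => Complex.exp ((-(α:ℂ) * Complex.I) * s))
      (-(α:ℂ) * Complex.I) 0 := by
    have := ((h1.const_mul (-(α:ℂ) * Complex.I)).cexp)
    simpa using this
  have hD1 : HasDerivAt (fun s : ℝ => H (T + s)) (h T) 0 := by
    have := (hHd (T + 0)).comp_const_add T 0
    simpa using this
  have hD : HasDerivAt (fun s : ℝ => H (T + s) - H s) (h T - h 0) 0 := hD1.sub (hHd 0)
  have hfull := ((hE.mul hD).const_mul c⁻¹)
  convert hfull using 1
  · rfl
  · rfl
  have hhT : h T = Complex.exp (α * T * Complex.I) * g z := by rw [hh]; simp [hper]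
  have hh0 : h 0 = g z := by rw [hh]; simp [hΦ0]
  have hH0 : H 0 = 0 := by rw [hH]; simp
  simp only [hhT, hh0, hH0, Complex.ofReal_zero, mul_zero, Complex.exp_zero, one_mul,
    add_zero, sub_zero]
  rw [hc_def]
  rw [← hc_def]
  field_simp
  rw [hc_def]
  ring_nf
end
end
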